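/- Let V ⊂ L²(0,T) be the space of continuous piecewise linear functions on a uniform partition with mesh size h_t vanishing at t = 0, and let W ⊂ H¹₀(Ω) for Ω = (0,L) be continuous piecewise linear functions on a uniform spatial partition with mesh size h_x. If h_t < h_x, then for every nonzero u_h ∈ W ⊗ V there exists w_h in the corresponding test space (piecewise bilinear, vanishing at t = T) with -⟨∂_t u_h, ∂_t w_h⟩_{L²(Q)} + ⟨∂_x u_h, ∂_x w_h⟩_{L²(Q)} ≠ 0; i.e. the unstabilised Galerkin system matrix -A_{h_t} ⊗ M_{h_x} + M_{h_t} ⊗ A_{h_x} is nonsingular under the CFL condition h_t < h_x. -/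

import Mathlib

/-!
Ansatz functions vanish at `t = 0` and test functions at `t = T`, so the time stiffness and mass
matrices pair the test node `n` only with the ansatz nodes `n - 1, n, n + 1`, whose indices
`n - 2, n - 1, n` never exceed `n`: both are lower triangular, and the space-time system is a time-stepping scheme,
block lower triangular with the same diagonal block `(1 / h_t) M_{h_x} + (h_t / 6) A_{h_x}` in
every time step. That block is the tridiagonal Toeplitz matrix with diagonal
`2 h_x / (3 h_t) + h_t / (3 h_x)` and off-diagonal `h_x / (6 h_t) - h_t / (6 h_x)`, which is
strictly diagonally dominant, hence nonsingular by Gershgorin's theorem.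
-/

open Matrix
open scoped Kronecker
open OrderDual

namespace Matrix

section BlockTriangular

variable {α β ι R : Type*}

theorem BlockTriangular.kronecker [MulZeroClass R] {A : Matrix α α R} {b : α → β} [LT β]
    (hA : A.BlockTriangular b) (C : Matrix ι ι R) :
    (A ⊗ₖ C).BlockTriangular fun p => b p.1 := fun p q h => by
  simp [kroneckerMap_apply, hA h]

theorem BlockTriangular.det_eq_prod_det_submatrix_prodMk [CommRing R] [Fintype α]
    [LinearOrder α] [DecidableEq α] [Fintype ι] [DecidableEq ι]
    {B : Matrix (α × ι) (α × ι) R} (hB : B.BlockTriangular fun p => toDual p.1) :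
    B.det = ∏ a, (B.submatrix (Prod.mk a) (Prod.mk a)).det := by
  rw [hB.det_fintype]
  refine Fintype.prod_equiv ofDual _ _ fun k => ?_
  let e : ι ≃ {p : α × ι // toDual p.1 = k} :=
    { toFun := fun i => ⟨(ofDual k, i), rfl⟩
      invFun := fun p => p.1.2
      left_inv := fun _ => rfl
      right_inv := by rintro ⟨⟨a, i⟩, rfl⟩; rfl }
  rw [← det_submatrix_equiv_self e]
  rfl

end BlockTriangular

section Tridiagonal

variable {R : Type*}

def tridiagToeplitz [Zero R] (n : ℕ) (a b : R) : Matrix (Fin n) (Fin n) R :=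
  of fun i j => if (i : ℕ) = j then a else if (i : ℕ) + 1 = j ∨ (j : ℕ) + 1 = i then b else 0

theorem sum_norm_tridiagToeplitz_offDiag_le [SeminormedAddCommGroup R] (n : ℕ) (a b : R)
    (k : Fin n) :
    ∑ j ∈ Finset.univ.erase k, ‖tridiagToeplitz n a b k j‖ ≤ 2 * ‖b‖ := by
  let adj : Fin n → Prop := fun j => (k : ℕ) + 1 = j ∨ (j : ℕ) + 1 = k
  have hcard : (Finset.univ.filter adj).card ≤ 2 := by
    refine (Finset.card_le_card_of_injOn Fin.val (t := {(k : ℕ) + 1, (k : ℕ) - 1})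
      ?_ Fin.val_injective.injOn).trans Finset.card_le_two
    intro j hj
    simp only [Finset.coe_filter, Finset.mem_univ, true_and, Set.mem_ofPred_eq, adj] at hj
    simp only [Finset.coe_insert, Finset.coe_singleton, Set.mem_insert_iff,
      Set.mem_singleton_iff]
    omega
  calc ∑ j ∈ Finset.univ.erase k, ‖tridiagToeplitz n a b k j‖
      ≤ ∑ j, if adj j then ‖b‖ else 0 := by
        refine Finset.sum_le_sum_of_subset_of_nonneg (Finset.erase_subset _ _)
          (fun _ _ _ => by positivity) |>.trans' (Finset.sum_le_sum fun j hj => ?_)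
        have hjk : (k : ℕ) ≠ j := fun h => (Finset.mem_erase.1 hj).1 (Fin.ext h.symm)
        simp only [tridiagToeplitz, of_apply, if_neg hjk]
        split_ifs <;> simp
    _ = (Finset.univ.filter adj).card * ‖b‖ := by
        rw [← Finset.sum_filter, Finset.sum_const, nsmul_eq_mul]
    _ ≤ 2 * ‖b‖ := by gcongr; exact_mod_cast hcard

theorem det_tridiagToeplitz_ne_zero [NormedField R] (n : ℕ) {a b : R} (h : 2 * ‖b‖ < ‖a‖) :
    (tridiagToeplitz n a b).det ≠ 0 :=
  det_ne_zero_of_sum_row_lt_diag fun k => by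
    simpa [tridiagToeplitz] using (sum_norm_tridiagToeplitz_offDiag_le n a b k).trans_lt h

end Tridiagonal

end Matrix

theorem stmt10_general (L T : ℝ) (hL : 0 < L) (hT : 0 < T) (Nx Nt : ℕ)
    (hNx : 0 < Nx) (hNt : 0 < Nt)
    (hx ht : ℝ) (hhx : hx = L / Nx) (hht : ht = T / Nt)
    (Mx Ax : Matrix (Fin (Nx - 1)) (Fin (Nx - 1)) ℝ)
    (At Mt : Matrix (Fin Nt) (Fin Nt) ℝ)
    (hMx : ∀ i j, Mx i j =
      hx * (if (i : ℕ) = (j : ℕ) then 2 / 3 else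
        if (i : ℕ) + 1 = (j : ℕ) ∨ (j : ℕ) + 1 = (i : ℕ) then 1 / 6 else 0))
    (hAx : ∀ i j, Ax i j =
      1 / hx * (if (i : ℕ) = (j : ℕ) then 2 else
        if (i : ℕ) + 1 = (j : ℕ) ∨ (j : ℕ) + 1 = (i : ℕ) then -1 else 0))
    (hAt : ∀ n m, At n m =
      1 / ht * (if (n : ℕ) = (m : ℕ) + 1 then 2 else
        if (n : ℕ) = (m : ℕ) + 2 ∨ (n : ℕ) = (m : ℕ) then -1 else 0))
    (hMt : ∀ n m, Mt n m =
      ht * (if (n : ℕ) = (m : ℕ) + 1 then 2 / 3 else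
        if (n : ℕ) = (m : ℕ) + 2 ∨ (n : ℕ) = (m : ℕ) then 1 / 6 else 0)) :
    (-(At ⊗ₖ Mx) + Mt ⊗ₖ Ax).det ≠ 0 := by
  have hx0 : 0 < hx := hhx ▸ by positivity
  have ht0 : 0 < ht := hht ▸ by positivity
  have hAt_tri : At.BlockTriangular toDual := fun n m h => by
    rw [toDual_lt_toDual, ← Fin.val_fin_lt] at h
    rw [hAt, if_neg (by omega), if_neg (by omega), mul_zero]
  have hMt_tri : Mt.BlockTriangular toDual := fun n m h => by
    rw [toDual_lt_toDual, ← Fin.val_fin_lt] at h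
    rw [hMt, if_neg (by omega), if_neg (by omega), mul_zero]
  set d := 2 * hx / (3 * ht) + ht / (3 * hx)
  set e := hx / (6 * ht) - ht / (6 * hx)
  have hblock : ∀ n, (-(At ⊗ₖ Mx) + Mt ⊗ₖ Ax).submatrix (Prod.mk n) (Prod.mk n) =
      tridiagToeplitz (Nx - 1) d e := fun n => by
    have hAt_nn : At n n = -(1 / ht) := by simp [hAt]
    have hMt_nn : Mt n n = ht / 6 := by simp [hMt]; ring
    ext i j
    simp only [submatrix_apply, Matrix.add_apply, Matrix.neg_apply, kroneckerMap_apply, hAt_nn,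
      hMt_nn, hMx, hAx, tridiagToeplitz, of_apply]
    split_ifs <;> simp only [d, e, mul_zero, neg_zero, add_zero] <;> field_simp <;> ring
  have hdom : 2 * ‖e‖ < ‖d‖ := by
    rw [Real.norm_eq_abs, Real.norm_eq_abs, abs_of_pos (by positivity : 0 < d)]
    have he : |e| ≤ hx / (6 * ht) + ht / (6 * hx) :=
      (abs_sub _ _).trans_eq (by rw [abs_of_pos (by positivity), abs_of_pos (by positivity)])
    have hgap : 0 < hx / (3 * ht) := by positivity
    linarith [show d = 2 * (hx / (6 * ht) + ht / (6 * hx)) + hx / (3 * ht) by ring]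
  rw [((hAt_tri.kronecker Mx).neg.add (hMt_tri.kronecker Ax)).det_eq_prod_det_submatrix_prodMk]
  simp only [hblock]
  exact Finset.prod_ne_zero_iff.2 fun _ _ => det_tridiagToeplitz_ne_zero _ hdom

/-- under the CFL condition `h_t < h_x`, the unstabilised space-time
Galerkin matrix `-A_{h_t} ⊗ M_{h_x} + M_{h_t} ⊗ A_{h_x}` for piecewise (bi)linear
ansatz functions (vanishing at `t = 0`) against test functions (vanishing at `t = T`)
on uniform meshes of `Q = (0,L) × (0,T)` is nonsingular; equivalently, for every
nonzero discrete `u_h` there is a discrete test function `w_h` with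
`-⟨∂ₜu_h, ∂ₜw_h⟩ + ⟨∂ₓu_h, ∂ₓw_h⟩ ≠ 0`. Test basis functions are indexed by the
time nodes `0,…,N_t-1`, ansatz basis functions by `1,…,N_t`, and spatial hat
functions by the interior nodes `1,…,N_x-1`. -/
theorem stmt10 (L T : ℝ) (hL : 0 < L) (hT : 0 < T) (Nx Nt : ℕ)
    (hNx : 0 < Nx) (hNt : 0 < Nt)
    (hx ht : ℝ) (hhx : hx = L / Nx) (hht : ht = T / Nt) (hCFL : ht < hx)
    (Mx Ax : Matrix (Fin (Nx - 1)) (Fin (Nx - 1)) ℝ)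
    (At Mt : Matrix (Fin Nt) (Fin Nt) ℝ)
    (hMx : ∀ i j, Mx i j =
      hx * (if (i : ℕ) = (j : ℕ) then 2 / 3 else
        if (i : ℕ) + 1 = (j : ℕ) ∨ (j : ℕ) + 1 = (i : ℕ) then 1 / 6 else 0))
    (hAx : ∀ i j, Ax i j =
      1 / hx * (if (i : ℕ) = (j : ℕ) then 2 else
        if (i : ℕ) + 1 = (j : ℕ) ∨ (j : ℕ) + 1 = (i : ℕ) then -1 else 0))
    (hAt : ∀ n m, At n m =
      1 / ht * (if (n : ℕ) = (m : ℕ) + 1 then 2 else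
        if (n : ℕ) = (m : ℕ) + 2 ∨ (n : ℕ) = (m : ℕ) then -1 else 0))
    (hMt : ∀ n m, Mt n m =
      ht * (if (n : ℕ) = (m : ℕ) + 1 then 2 / 3 else
        if (n : ℕ) = (m : ℕ) + 2 ∨ (n : ℕ) = (m : ℕ) then 1 / 6 else 0)) :
    (-(At ⊗ₖ Mx) + Mt ⊗ₖ Ax).det ≠ 0 :=
  stmt10_general L T hL hT Nx Nt hNx hNt hx ht hhx hht Mx Ax At Mt hMx hAx hAt hMt
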